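/- If f is strongly convex of order β (0 < β ≤ 1), then |a_2| ≤ β, and this bound is sharp. -/

import Mathlib

open Complex Metric

/-- The quantity `1 + z f''(z)/f'(z)`. -/
noncomputable def convexQuot (f : ℂ → ℂ) (z : ℂ) : ℂ :=
  1 + z * deriv (deriv f) z / deriv f z

/-- `f` is analytic on the unit disk with `f(0) = 0` and `f'(0) = 1`. -/
def IsNormalizedAnalytic (f : ℂ → ℂ) : Prop :=
  DifferentiableOn ℂ f (ball 0 1) ∧ f 0 = 0 ∧ deriv f 0 = 1

/-- `a` is the sequence of Taylor coefficients of `f` at `0` (normalized). -/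
def HasCoeffs (f : ℂ → ℂ) (a : ℕ → ℂ) : Prop :=
  (∀ z ∈ ball (0 : ℂ) 1, HasSum (fun n : ℕ => a n * z ^ n) (f z)) ∧ a 0 = 0 ∧ a 1 = 1

/-- `f` is convex of order `α`: `Re(1 + z f''/f') > α` on the unit disk. -/
def IsConvexOfOrder (α : ℝ) (f : ℂ → ℂ) : Prop :=
  IsNormalizedAnalytic f ∧ ∀ z ∈ ball (0 : ℂ) 1, α < (convexQuot f z).re

/-- `f` is convex: `Re(1 + z f''/f') > 0` on the unit disk. -/
def IsConvex (f : ℂ → ℂ) : Prop := IsConvexOfOrder 0 f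

/-- `f` is strongly convex of order `β`: `|arg(1 + z f''/f')| ≤ βπ/2` on the unit disk. -/
def IsStronglyConvex (β : ℝ) (f : ℂ → ℂ) : Prop :=
  IsNormalizedAnalytic f ∧
    ∀ z ∈ ball (0 : ℂ) 1, |Complex.arg (convexQuot f z)| ≤ β * Real.pi / 2

/-- `g` is an inverse of `f` near `0`, with Taylor coefficients `A` on `|w| < r`. -/
def IsInverseWithCoeffs (f g : ℂ → ℂ) (A : ℕ → ℂ) (r : ℝ) : Prop :=
  0 < r ∧ (∀ w ∈ ball (0 : ℂ) r, g w ∈ ball (0 : ℂ) 1 ∧ f (g w) = w) ∧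
    (∀ w ∈ ball (0 : ℂ) r, HasSum (fun n : ℕ => A n * w ^ n) (g w)) ∧ A 0 = 0 ∧ A 1 = 1

/-- `1 + z f''/f'` is subordinate to `p` on the unit disk. -/
def ConvexQuotSubord (f : ℂ → ℂ) (p : ℂ → ℂ) : Prop :=
  ∃ ω : ℂ → ℂ, DifferentiableOn ℂ ω (ball 0 1) ∧ ω 0 = 0 ∧
    (∀ z ∈ ball (0 : ℂ) 1, ω z ∈ ball (0 : ℂ) 1) ∧
    ∀ z ∈ ball (0 : ℂ) 1, convexQuot f z = p (ω z)

/-- The class `𝒞_E` of convex functions associated with the exponential. -/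
def MemCE (f : ℂ → ℂ) : Prop := IsNormalizedAnalytic f ∧ ConvexQuotSubord f Complex.exp

/-- The class `𝒞_{SG}` of convex functions associated with the modified sigmoid. -/
def MemCSG (f : ℂ → ℂ) : Prop :=
  IsNormalizedAnalytic f ∧ ConvexQuotSubord f (fun w => 2 / (1 + Complex.exp (-w)))

/-!
The quotient `q = 1 + z f''/f'` of a strongly convex `f` is holomorphic on the disk: `f'` has
no zeros, because `Re q ≥ 0` makes `|z f'(z)|` nondecreasing along each ray from `0`. Moreover
`q 0 = 1` and `q' 0 = f'' 0 = 2 a₂`. The power `q ^ (1 / β)` has nonnegative real part, so the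
Schwarz lemma applied to `(p - 1) / (p + 1)` for `p = q ^ (1 / β)` gives `|q' 0| ≤ 2 β`.
Equality holds for the `f` with `q = ((1 + z) / (1 - z)) ^ β`, obtained by integrating twice.
-/

open Set Filter Topology
open scoped NNReal Nat ComplexConjugate

theorem re_pos_of_re_nonneg {U : Set ℂ} {q : ℂ → ℂ} {c z : ℂ} (hU : IsOpen U)
    (hUc : IsPreconnected U) (hq : DifferentiableOn ℂ q U) (hc : c ∈ U) (hqc : 0 < (q c).re)
    (hre : ∀ w ∈ U, 0 ≤ (q w).re) (hz : z ∈ U) : 0 < (q z).re := by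
  rcases (hq.analyticOnNhd hU).is_constant_or_isOpen hUc with ⟨w, hw⟩ | hopen
  · rwa [hw z hz, ← hw c hc]
  · have hsub : q '' U ⊆ interior {w : ℂ | 0 ≤ w.re} :=
      interior_maximal (image_subset_iff.2 hre) (hopen U subset_rfl hU)
    rw [interior_setOfPred_le_re] at hsub
    exact hsub (mem_image_of_mem q hz)

theorem norm_sub_one_le_norm_add_one {w : ℂ} (hw : 0 ≤ w.re) : ‖w - 1‖ ≤ ‖w + 1‖ := by
  rw [← sq_le_sq₀ (norm_nonneg _) (norm_nonneg _), Complex.sq_norm, Complex.sq_norm,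
    normSq_apply, normSq_apply]
  simp only [sub_re, add_re, one_re, sub_im, add_im, one_im]
  nlinarith

theorem norm_deriv_le_two_of_re_nonneg {p : ℂ → ℂ} (hp : DifferentiableOn ℂ p (ball 0 1))
    (hp0 : p 0 = 1) (hre : ∀ z ∈ ball (0 : ℂ) 1, 0 ≤ (p z).re) : ‖deriv p 0‖ ≤ 2 := by
  have h0 : (0 : ℂ) ∈ ball (0 : ℂ) 1 := mem_ball_self one_pos
  have hden : ∀ z ∈ ball (0 : ℂ) 1, p z + 1 ≠ 0 := fun z hz h => by
    have := congrArg re h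
    simp only [add_re, one_re, zero_re] at this
    linarith [hre z hz]
  set ω : ℂ → ℂ := fun z => (p z - 1) / (p z + 1)
  have hω : DifferentiableOn ℂ ω (ball 0 1) := (hp.sub_const 1).div (hp.add_const 1) hden
  have hmaps : MapsTo ω (ball 0 1) (closedBall (ω 0) 1) := by
    intro z hz
    simp only [ω, hp0, sub_self, zero_div, mem_closedBall_zero_iff, norm_div]
    exact div_le_one_of_le₀ (norm_sub_one_le_norm_add_one (hre z hz)) (norm_nonneg _)
  have hderiv : HasDerivAt ω (deriv p 0 / 2) 0 := by
    have hp' := (hp.differentiableAt (isOpen_ball.mem_nhds h0)).hasDerivAt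
    exact ((hp'.sub_const 1).div (hp'.add_const 1) (hden 0 h0)).congr_deriv (by rw [hp0]; ring)
  have := norm_deriv_le_one_of_mapsTo_ball hω hmaps one_pos
  rw [hderiv.deriv, norm_div, Complex.norm_two] at this
  linarith

theorem arg_cpow_ofReal {w : ℂ} {c : ℝ} (hw : w ≠ 0) (h₁ : -Real.pi < c * arg w)
    (h₂ : c * arg w ≤ Real.pi) : arg (w ^ (c : ℂ)) = c * arg w := by
  have him : (log w * c).im = c * arg w := by simp [log_im, mul_comm]
  rw [cpow_def_of_ne_zero hw, ← log_im, log_exp (him ▸ h₁) (him ▸ h₂), him]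

theorem norm_deriv_le_of_abs_arg_le {q : ℂ → ℂ} {β : ℝ} (hβ0 : 0 < β) (hβ1 : β ≤ 1)
    (hq : DifferentiableOn ℂ q (ball 0 1)) (hq0 : q 0 = 1)
    (harg : ∀ z ∈ ball (0 : ℂ) 1, |arg (q z)| ≤ β * Real.pi / 2) : ‖deriv q 0‖ ≤ 2 * β := by
  have h0 : (0 : ℂ) ∈ ball (0 : ℂ) 1 := mem_ball_self one_pos
  have hre : ∀ z ∈ ball (0 : ℂ) 1, 0 < (q z).re := fun z hz =>
    re_pos_of_re_nonneg isOpen_ball (convex_ball 0 1).isPreconnected hq h0 (by simp [hq0])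
      (fun w hw => abs_arg_le_pi_div_two_iff.mp ((harg w hw).trans (by nlinarith [Real.pi_pos])))
      hz
  have hslit : ∀ z ∈ ball (0 : ℂ) 1, q z ∈ slitPlane := fun z hz => Or.inl (hre z hz)
  set p : ℂ → ℂ := fun z => q z ^ ((β⁻¹ : ℝ) : ℂ)
  have hpre : ∀ z ∈ ball (0 : ℂ) 1, 0 ≤ (p z).re := by
    intro z hz
    have hq_ne : q z ≠ 0 := slitPlane_ne_zero (hslit z hz)
    have hβarg : |β⁻¹ * arg (q z)| ≤ Real.pi / 2 := by
      rw [abs_mul, abs_inv, abs_of_pos hβ0, inv_mul_le_iff₀ hβ0]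
      linarith [harg z hz]
    rw [← abs_arg_le_pi_div_two_iff, arg_cpow_ofReal hq_ne
      (by linarith [neg_abs_le (β⁻¹ * arg (q z)), Real.pi_pos])
      (by linarith [le_abs_self (β⁻¹ * arg (q z)), Real.pi_pos])]
    exact hβarg
  have hp' : HasDerivAt p (β⁻¹ * deriv q 0) 0 := by
    convert ((hq.differentiableAt (isOpen_ball.mem_nhds h0)).hasDerivAt.cpow_const
      (hslit 0 h0)) using 1
    simp [hq0]
  have := norm_deriv_le_two_of_re_nonneg (hq.cpow_const hslit) (by simp [hq0]) hpre
  rw [hp'.deriv, norm_mul, norm_real, Real.norm_of_nonneg (inv_nonneg.2 hβ0.le),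
    inv_mul_le_iff₀ hβ0] at this
  linarith

theorem hasFPowerSeriesOnBall_ofScalars_of_hasSum {a : ℕ → ℂ} {f : ℂ → ℂ} {r : ℝ≥0}
    (hr : 0 < r) (h : ∀ z ∈ ball (0 : ℂ) r, HasSum (fun n => a n * z ^ n) (f z)) :
    HasFPowerSeriesOnBall f (FormalMultilinearSeries.ofScalars ℂ a) 0 r where
  r_le := ENNReal.le_of_forall_nnreal_lt fun ρ hρ => by
    have hρr : (ρ : ℂ) ∈ ball (0 : ℂ) r := by simpa using hρ
    refine FormalMultilinearSeries.le_radius_of_tendsto _ (l := 0) ?_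
    simpa [FormalMultilinearSeries.ofScalars_norm] using
      (h _ hρr).summable.tendsto_atTop_zero.norm
  r_pos := by simpa using hr
  hasSum {y} hy := by
    simpa [FormalMultilinearSeries.ofScalars_apply_eq, mul_comm] using h y (by simpa using hy)

theorem coeff_eq_iteratedDeriv_div_factorial {a : ℕ → ℂ} {f : ℂ → ℂ} {r : ℝ≥0} (hr : 0 < r)
    (h : ∀ z ∈ ball (0 : ℂ) r, HasSum (fun n => a n * z ^ n) (f z)) (n : ℕ) :
    a n = iteratedDeriv n f 0 / n ! := by
  have hps := hasFPowerSeriesOnBall_ofScalars_of_hasSum hr h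
  exact congrFun (FormalMultilinearSeries.ofScalars_series_injective ℂ ℂ
    (hps.hasFPowerSeriesAt.eq_formalMultilinearSeries hps.analyticAt.hasFPowerSeriesAt)) n

theorem HasCoeffs.coeff_two_eq {f : ℂ → ℂ} {a : ℕ → ℂ} (h : HasCoeffs f a) :
    a 2 = deriv (deriv f) 0 / 2 := by
  rw [coeff_eq_iteratedDeriv_div_factorial (a := a) (r := 1) one_pos (by simpa using h.1),
    iteratedDeriv_succ, iteratedDeriv_one]
  norm_num

theorem re_mul_deriv_mul_conj_nonneg {f : ℂ → ℂ} {z : ℂ}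
    (hf : DifferentiableAt ℂ (deriv f) z) (hre : 0 ≤ (convexQuot f z).re) :
    0 ≤ (z * deriv (fun w => w * deriv f w) z * conj (z * deriv f z)).re := by
  have hd : deriv (fun w => w * deriv f w) z = deriv f z + z * deriv (deriv f) z := by
    simpa using (hasDerivAt_id' z |>.fun_mul hf.hasDerivAt).deriv
  rcases eq_or_ne (deriv f z) 0 with h0 | h0
  · simp [h0]
  · have : z * (deriv f z + z * deriv (deriv f) z) * conj (z * deriv f z)
        = convexQuot f z * (normSq (z * deriv f z) : ℂ) := by
      rw [← mul_conj, convexQuot]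
      field_simp
    rw [hd, this, re_mul_ofReal]
    exact mul_nonneg hre (normSq_nonneg _)

theorem norm_apply_ofReal_mul_le {h : ℂ → ℂ} (hh : DifferentiableOn ℂ h (ball 0 1))
    (hre : ∀ z ∈ ball (0 : ℂ) 1, 0 ≤ (z * deriv h z * conj (h z)).re)
    {z : ℂ} (hz : z ∈ ball (0 : ℂ) 1) {t : ℝ} (ht : t ∈ Icc (0 : ℝ) 1) :
    ‖h (t * z)‖ ≤ ‖h z‖ := by
  have hmem : ∀ s ∈ Icc (0 : ℝ) 1, (s : ℂ) * z ∈ ball (0 : ℂ) 1 := fun s hs => by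
    rw [mem_ball_zero_iff, norm_mul, norm_real, Real.norm_of_nonneg hs.1]
    exact lt_of_le_of_lt (mul_le_of_le_one_left (norm_nonneg z) hs.2) (mem_ball_zero_iff.1 hz)
  have hderiv : ∀ s ∈ Icc (0 : ℝ) 1, HasDerivAt (fun s : ℝ => ‖h (s * z)‖ ^ 2)
      (2 * (deriv h (s * z) * z * conj (h (s * z))).re) s := fun s hs => by
    have hcomp : HasDerivAt (fun w : ℂ => h (w * z)) (deriv h (s * z) * z) s :=
      (hh.differentiableAt (isOpen_ball.mem_nhds (hmem s hs))).hasDerivAt.comp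
        (s : ℂ) (hasDerivAt_mul_const z)
    simpa [Complex.inner] using hcomp.comp_ofReal.norm_sq
  have hmono : MonotoneOn (fun s : ℝ => ‖h (s * z)‖ ^ 2) (Icc 0 1) := by
    refine monotoneOn_of_deriv_nonneg (convex_Icc 0 1)
      (fun s hs => (hderiv s hs).continuousAt.continuousWithinAt) ?_ ?_
    · rw [interior_Icc]
      exact fun s hs =>
      (hderiv s (Ioo_subset_Icc_self hs)).differentiableAt.differentiableWithinAt
    · rw [interior_Icc]
      intro s hs
      rw [(hderiv s (Ioo_subset_Icc_self hs)).deriv]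
      have := hre _ (hmem s (Ioo_subset_Icc_self hs))
      rw [show (s : ℂ) * z * deriv h (s * z) * conj (h (s * z))
          = s * (deriv h (s * z) * z * conj (h (s * z))) by ring, re_ofReal_mul] at this
      linarith [(mul_nonneg_iff_of_pos_left hs.1).mp this]
  have := hmono ht ⟨zero_le_one, le_rfl⟩ ht.2
  simp only [ofReal_one, one_mul] at this
  exact (pow_le_pow_iff_left₀ (norm_nonneg _) (norm_nonneg _) two_ne_zero).mp this

theorem deriv_ne_zero_of_re_convexQuot_nonneg {f : ℂ → ℂ} (hf : DifferentiableOn ℂ f (ball 0 1))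
    (hf1 : deriv f 0 = 1) (hre : ∀ z ∈ ball (0 : ℂ) 1, 0 ≤ (convexQuot f z).re) {z : ℂ}
    (hz : z ∈ ball (0 : ℂ) 1) : deriv f z ≠ 0 := by
  intro hz0
  have hf' : DifferentiableOn ℂ (deriv f) (ball 0 1) :=
    (hf.analyticOnNhd isOpen_ball).deriv.differentiableOn
  have hz_ne : z ≠ 0 := by rintro rfl; simp [hf1] at hz0
  have hvanish : ∀ t ∈ Ioc (0 : ℝ) 1, deriv f (t * z) = 0 := fun t ht => by
    have := norm_apply_ofReal_mul_le (differentiableOn_id.mul hf') (fun w hw =>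
      re_mul_deriv_mul_conj_nonneg (hf'.differentiableAt (isOpen_ball.mem_nhds hw)) (hre w hw))
      hz (Ioc_subset_Icc_self ht)
    have h0 : (t : ℂ) * z * deriv f (t * z) = 0 := norm_le_zero_iff.1 (by simpa [hz0] using this)
    simpa [ht.1.ne', hz_ne] using h0
  have hcont : ContinuousAt (fun t : ℝ => deriv f (t * z)) 0 := by
    refine ContinuousAt.comp (g := deriv f) ?_ (by fun_prop)
    simpa using hf'.continuousOn.continuousAt (ball_mem_nhds 0 one_pos)
  have hlim : Tendsto (fun t : ℝ => deriv f (t * z)) (𝓝[>] 0) (𝓝 0) :=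
    tendsto_const_nhds.congr' (eventuallyEq_of_mem (Ioc_mem_nhdsGT one_pos)
      fun t ht => (hvanish t ht).symm)
  have := tendsto_nhds_unique (hcont.tendsto.mono_left nhdsWithin_le_nhds) hlim
  simp [hf1] at this

theorem differentiableOn_convexQuot {f : ℂ → ℂ} {U : Set ℂ} (hU : IsOpen U)
    (hf : DifferentiableOn ℂ f U) (hne : ∀ z ∈ U, deriv f z ≠ 0) :
    DifferentiableOn ℂ (convexQuot f) U := by
  have hf' := (hf.analyticOnNhd hU).deriv
  exact (differentiableOn_const 1).add
    ((differentiableOn_id.mul hf'.deriv.differentiableOn).div hf'.differentiableOn hne)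

@[simp]
theorem convexQuot_zero (f : ℂ → ℂ) : convexQuot f 0 = 1 := by
  simp [convexQuot]

theorem deriv_convexQuot_zero {f : ℂ → ℂ} (hf : AnalyticAt ℂ f 0) (hf1 : deriv f 0 = 1) :
    deriv (convexQuot f) 0 = deriv (deriv f) 0 := by
  have hq : HasDerivAt (convexQuot f) _ 0 :=
    (((hasDerivAt_id 0).mul hf.deriv.deriv.differentiableAt.hasDerivAt).div
      hf.deriv.differentiableAt.hasDerivAt (by simp [hf1])).const_add 1
  simp [hq.deriv, hf1]

theorem IsStronglyConvex.norm_coeff_two_le {β : ℝ} {f : ℂ → ℂ} {a : ℕ → ℂ} (hβ0 : 0 < β)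
    (hβ1 : β ≤ 1) (hf : IsStronglyConvex β f) (ha : HasCoeffs f a) : ‖a 2‖ ≤ β := by
  obtain ⟨⟨hfd, -, hf1⟩, harg⟩ := hf
  have hre : ∀ z ∈ ball (0 : ℂ) 1, 0 ≤ (convexQuot f z).re := fun z hz =>
    abs_arg_le_pi_div_two_iff.mp ((harg z hz).trans (by nlinarith [Real.pi_pos]))
  have hq := differentiableOn_convexQuot isOpen_ball hfd
    fun z hz => deriv_ne_zero_of_re_convexQuot_nonneg hfd hf1 hre hz
  have hbound := norm_deriv_le_of_abs_arg_le hβ0 hβ1 hq (convexQuot_zero f) harg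
  rw [deriv_convexQuot_zero (hfd.analyticAt (ball_mem_nhds 0 one_pos)) hf1] at hbound
  rw [ha.coeff_two_eq, norm_div, Complex.norm_two]
  linarith

theorem exists_convexQuot_eqOn {q : ℂ → ℂ} (hq : DifferentiableOn ℂ q (ball 0 1))
    (hq0 : q 0 = 1) :
    ∃ f, IsNormalizedAnalytic f ∧ EqOn (convexQuot f) q (ball 0 1) := by
  have h0 : (0 : ℂ) ∈ ball (0 : ℂ) 1 := mem_ball_self one_pos
  -- `f'' / f' = (q - 1) / z` determines `log f'`, hence `f'`, by integration
  obtain ⟨g, hg0, hg⟩ :=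
    ((differentiableOn_dslope (ball_mem_nhds 0 one_pos)).2 hq).isExactOn_ball.with_val_at 0 0
  have hexp : DifferentiableOn ℂ (fun z => exp (g z)) (ball 0 1) := fun z hz =>
    (hg z hz).differentiableAt.cexp.differentiableWithinAt
  obtain ⟨f, hf0, hf⟩ := hexp.isExactOn_ball.with_val_at 0 0
  have hf' : EqOn (deriv f) (fun z => exp (g z)) (ball 0 1) := fun z hz => (hf z hz).deriv
  have hf'' : ∀ z ∈ ball (0 : ℂ) 1, deriv (deriv f) z = exp (g z) * dslope q 0 z := fun z hz =>
    (eventuallyEq_of_mem (isOpen_ball.mem_nhds hz) hf').deriv_eq.trans (hg z hz).cexp.deriv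
  refine ⟨f, ⟨fun z hz => (hf z hz).differentiableAt.differentiableWithinAt, hf0,
    by simp [hf' h0, hg0]⟩, fun z hz => ?_⟩
  have := sub_smul_dslope q 0 z
  rw [sub_zero, smul_eq_mul, hq0] at this
  rw [convexQuot, hf'' z hz, hf' hz, mul_comm (exp _), ← mul_assoc,
    mul_div_cancel_right₀ _ (exp_ne_zero _), this, add_sub_cancel]

theorem re_one_add_div_one_sub_pos {z : ℂ} (hz : ‖z‖ < 1) : 0 < ((1 + z) / (1 - z)).re := by
  have hne : 1 - z ≠ 0 := fun h => by simp [← sub_eq_zero.1 h] at hz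
  have hz2 : normSq z < 1 := by rw [← Complex.sq_norm]; nlinarith [norm_nonneg z]
  rw [div_re, ← add_div]
  refine div_pos ?_ (normSq_pos.2 hne)
  simp only [add_re, one_re, sub_re, add_im, one_im, sub_im, zero_add, zero_sub]
  rw [normSq_apply] at hz2
  nlinarith

/-- The conformal map of the unit disk onto the sector `|arg w| < β π / 2`. -/
noncomputable def sectorMap (β : ℝ) (z : ℂ) : ℂ := ((1 + z) / (1 - z)) ^ (β : ℂ)

theorem differentiableOn_sectorMap (β : ℝ) : DifferentiableOn ℂ (sectorMap β) (ball 0 1) := by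
  have hden : ∀ z ∈ ball (0 : ℂ) 1, 1 - z ≠ 0 := fun z hz h => by
    simp [← sub_eq_zero.1 h] at hz
  exact ((differentiableOn_const 1).add differentiableOn_id |>.div
    ((differentiableOn_const 1).sub differentiableOn_id) hden).cpow_const
    fun z hz => Or.inl (re_one_add_div_one_sub_pos (mem_ball_zero_iff.1 hz))

@[simp]
theorem sectorMap_zero (β : ℝ) : sectorMap β 0 = 1 := by
  simp [sectorMap]

theorem abs_arg_sectorMap_le {β : ℝ} (hβ0 : 0 ≤ β) (hβ1 : β ≤ 1) {z : ℂ}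
    (hz : z ∈ ball (0 : ℂ) 1) : |arg (sectorMap β z)| ≤ β * Real.pi / 2 := by
  have hre := re_one_add_div_one_sub_pos (mem_ball_zero_iff.1 hz)
  have harg := abs_arg_lt_pi_div_two_iff.2 (Or.inl hre)
  have hβarg : |β * arg ((1 + z) / (1 - z))| ≤ β * Real.pi / 2 := by
    rw [abs_mul, abs_of_nonneg hβ0]
    nlinarith
  have hβπ : β * Real.pi / 2 < Real.pi := by nlinarith [Real.pi_pos]
  rw [sectorMap, arg_cpow_ofReal (fun h => by simp [h] at hre)
    (by linarith [neg_abs_le (β * arg ((1 + z) / (1 - z)))])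
    (by linarith [le_abs_self (β * arg ((1 + z) / (1 - z)))])]
  exact hβarg

theorem hasDerivAt_sectorMap_zero (β : ℝ) : HasDerivAt (sectorMap β) (2 * β) 0 := by
  have hM : HasDerivAt (fun z : ℂ => (1 + z) / (1 - z)) 2 0 :=
    (((hasDerivAt_id' (0 : ℂ)).const_add 1).div ((hasDerivAt_id' (0 : ℂ)).const_sub 1)
      (by norm_num)).congr_deriv (by norm_num)
  exact (hM.cpow_const (c := (β : ℂ)) (by simp)).congr_deriv (by simp [mul_comm])

theorem exists_isStronglyConvex_coeff_two_eq {β : ℝ} (hβ0 : 0 ≤ β) (hβ1 : β ≤ 1) :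
    ∃ f a, IsStronglyConvex β f ∧ HasCoeffs f a ∧ a 2 = β := by
  obtain ⟨f, hf, hfq⟩ := exists_convexQuot_eqOn (differentiableOn_sectorMap β) (sectorMap_zero β)
  refine ⟨f, fun n => iteratedDeriv n f 0 / n !, ⟨hf, fun z hz => ?_⟩,
    ⟨fun z hz => ?_, ?_, ?_⟩, ?_⟩
  · rw [hfq hz]
    exact abs_arg_sectorMap_le hβ0 hβ1 hz
  · simpa [div_eq_inv_mul, mul_comm, mul_left_comm] using
      Complex.hasSum_taylorSeries_on_ball hf.1 hz
  · simp [hf.2.1]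
  · simp [hf.2.2]
  · have hderiv : deriv (convexQuot f) 0 = 2 * β :=
      ((eventuallyEq_of_mem (ball_mem_nhds 0 one_pos) hfq).deriv_eq).trans
        (hasDerivAt_sectorMap_zero β).deriv
    rw [deriv_convexQuot_zero (hf.1.analyticAt (ball_mem_nhds 0 one_pos)) hf.2.2] at hderiv
    simp [iteratedDeriv_succ, hderiv]

theorem strongly_convex_a2 (β : ℝ) (hβ0 : 0 < β) (hβ1 : β ≤ 1) :
    (∀ f : ℂ → ℂ, ∀ a : ℕ → ℂ, IsStronglyConvex β f → HasCoeffs f a →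
      ‖a 2‖ ≤ β) ∧
    (∃ f : ℂ → ℂ, ∃ a : ℕ → ℂ, IsStronglyConvex β f ∧ HasCoeffs f a ∧
      ‖a 2‖ = β) := by
  refine ⟨fun f a hf ha => hf.norm_coeff_two_le hβ0 hβ1 ha, ?_⟩
  obtain ⟨f, a, hf, ha, ha2⟩ := exists_isStronglyConvex_coeff_two_eq hβ0.le hβ1
  exact ⟨f, a, hf, ha, by rw [ha2, norm_real, Real.norm_of_nonneg hβ0.le]⟩
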